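/- Let R ≅ R₁ × ⋯ × Rₙ (n ≥ 2), where each (Rᵢ, Mᵢ) is a local principal ideal ring with at least two nonzero proper ideals. Then for any two distinct vertices I, J of PIS(R), N[I] ≠ N[J]; that is, no two distinct vertices have equal closed neighborhoods. -/

import Mathlib

/-!
Ideals of `∏ Rᵢ` are tuples of ideals, and since primes of an Artinian local ring are maximal,
the prime ideals of the product are the tuples with `Mₚ` in one place and `⊤` elsewhere.
If `Iᵢ` is proper while `Jᵢ = ⊤`, the ideal with `Mᵢ` at `i` and `⊤` elsewhere lies in `N[I]`
but not in `N[J]`. Otherwise primality of `I + J` forces `I` and `J` to be `⊤` outside one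
place `p`, and as the principal ideal `Mₚ` is not the sum of two smaller ideals, one of them,
say `I`, has `Iₚ = Mₚ`. Then the ideal with `0` at `p`, `M_q ≠ 0` at some `q ≠ p` and `⊤`
elsewhere is adjacent to `I`, and its adjacency to `J` forces `Jₚ` to be prime, i.e. `J = I`.
-/

open SimpleGraph

/-- The prime ideal sum graph of a commutative ring. -/
def PIS (R : Type*) [CommRing R] :
    SimpleGraph {I : Ideal R // I ≠ ⊥ ∧ I ≠ ⊤} where
  Adj I J := I ≠ J ∧ (I.1 + J.1).IsPrime
  symm := ⟨by
    rintro I J ⟨hne, hp⟩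
    exact ⟨hne.symm, by rwa [add_comm]⟩⟩
  loopless := ⟨by rintro I ⟨hne, -⟩; exact hne rfl⟩

open IsLocalRing

theorem IsLocalRing.eq_top_or_eq_top_of_sup_eq_top {A : Type*} [CommSemiring A] [IsLocalRing A]
    {X Y : Ideal A} (h : X ⊔ Y = ⊤) : X = ⊤ ∨ Y = ⊤ := by
  by_contra! hXY
  exact (maximalIdeal.isMaximal A).ne_top <|
    top_le_iff.mp (h ▸ sup_le (le_maximalIdeal hXY.1) (le_maximalIdeal hXY.2))

section LocalRing

variable {A : Type*} [CommRing A] [IsLocalRing A]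

theorem IsLocalRing.eq_maximalIdeal_or_of_sup_eq (hM : (maximalIdeal A).IsPrincipal)
    {X Y : Ideal A} (h : X ⊔ Y = maximalIdeal A) :
    X = maximalIdeal A ∨ Y = maximalIdeal A := by
  obtain ⟨m, hm⟩ := hM
  have hX : X ≤ maximalIdeal A := h ▸ le_sup_left
  have hY : Y ≤ maximalIdeal A := h ▸ le_sup_right
  suffices m ∈ X ∨ m ∈ Y by
    refine this.imp (fun hmX => le_antisymm hX ?_) (fun hmY => le_antisymm hY ?_) <;>
      rw [hm, Ideal.submodule_span_eq, Ideal.span_singleton_le_iff_mem] <;> assumption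
  have hmM : m ∈ maximalIdeal A := hm ▸ Submodule.mem_span_singleton_self m
  obtain ⟨x, hx, y, hy, hxy⟩ := Submodule.mem_sup.mp (h ▸ hmM)
  obtain ⟨a, rfl⟩ := Ideal.mem_span_singleton'.mp (hm ▸ hX hx)
  obtain ⟨b, rfl⟩ := Ideal.mem_span_singleton'.mp (hm ▸ hY hy)
  -- `(a + b) * m = m`: either `a + b` is a unit, so `a` or `b` is, or `1 - (a + b)` is, so `m = 0`.
  rcases isUnit_or_isUnit_one_sub_self (a + b) with hab | hab
  · exact (isUnit_or_isUnit_of_isUnit_add hab).imp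
      (fun ha => (X.unit_mul_mem_iff_mem ha).mp hx) (fun hb => (Y.unit_mul_mem_iff_mem hb).mp hy)
  · have hm0 : m = 0 := (hab.mul_right_eq_zero).mp (by linear_combination -hxy)
    exact Or.inl (hm0 ▸ X.zero_mem)

theorem IsLocalRing.isPrime_iff_eq_maximalIdeal [IsArtinianRing A] {P : Ideal A} :
    P.IsPrime ↔ P = maximalIdeal A :=
  ⟨fun _ => eq_maximalIdeal (IsArtinianRing.isMaximal_of_isPrime P),
    fun h => h ▸ (maximalIdeal.isMaximal A).isPrime⟩

end LocalRing

section Pi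

variable {ι : Type*} {R : ι → Type*} [∀ i, Semiring (R i)]

theorem Ideal.single_mem_pi_iff [DecidableEq ι] {c : ∀ i, Ideal (R i)} {i : ι} {r : R i} :
    Pi.single i r ∈ pi c ↔ r ∈ c i :=
  ⟨fun h => by simpa using h i, single_mem_pi⟩

theorem Ideal.isPrime_pi_iff {c : ∀ i, Ideal (R i)} :
    (pi c).IsPrime ↔ ∃ i, (c i).IsPrime ∧ ∀ j ≠ i, c j = ⊤ := by
  classical
  constructor
  · intro hP
    obtain ⟨i, hi⟩ : ∃ i, c i ≠ ⊤ := by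
      by_contra! h
      exact hP.ne_top ((eq_top_iff_one _).mpr fun i => (h i).symm ▸ Submodule.mem_top)
    refine ⟨i, ⟨hi, fun {a b} hab => ?_⟩, fun j hj => ?_⟩
    · have hmem : Pi.single i a * Pi.single i b ∈ pi c := by
        rw [← Pi.single_mul]; exact single_mem_pi_iff.mpr hab
      exact (hP.mem_or_mem hmem).imp single_mem_pi_iff.mp single_mem_pi_iff.mp
    · have hmem : Pi.single i (1 : R i) * Pi.single j (1 : R j) ∈ pi c := by
        convert (pi c).zero_mem using 1
        funext k
        by_cases hk : k = i
        · subst hk; simp [Pi.single_eq_of_ne hj.symm]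
        · simp [Pi.single_eq_of_ne hk]
      rcases hP.mem_or_mem hmem with h | h
      · exact absurd ((eq_top_iff_one _).mpr (single_mem_pi_iff.mp h)) hi
      · exact (eq_top_iff_one _).mpr (single_mem_pi_iff.mp h)
  · rintro ⟨i, hi, htop⟩
    have hcomap : pi c = (c i).comap (Pi.evalRingHom R i) := by
      ext x
      refine ⟨fun hx => hx i, fun hx j => ?_⟩
      by_cases hj : j = i
      · subst hj; exact hx
      · simp [htop j hj]
    exact hcomap ▸ IsPrime.comap _

theorem Ideal.isPrime_iff_piOrderIso [Finite ι] {P : Ideal (∀ i, R i)} :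
    P.IsPrime ↔ ∃ i, (piOrderIso P i).IsPrime ∧ ∀ j ≠ i, piOrderIso P j = ⊤ := by
  conv_lhs => rw [← piOrderIso.symm_apply_apply P]
  exact isPrime_pi_iff

end Pi

open Ideal (pi piOrderIso isPrime_iff_piOrderIso)

namespace PIS

section Ring

variable {S : Type*} [CommRing S]

theorem mem_closedNbhd_iff {I K : {I : Ideal S // I ≠ ⊥ ∧ I ≠ ⊤}} :
    K ∈ insert I ((PIS S).neighborSet I) ↔ K = I ∨ (I.1 ⊔ K.1).IsPrime := by
  rw [Set.mem_insert_iff, mem_neighborSet]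
  change K = I ∨ (I ≠ K ∧ (I.1 + K.1).IsPrime) ↔ _
  rw [Submodule.add_eq_sup]
  rcases eq_or_ne K I with rfl | hKI
  · simp
  · simp [hKI, hKI.symm]

end Ring

variable {ι : Type*} [Finite ι] {R : ι → Type*} [∀ i, CommRing (R i)]

def piVertex (c : ∀ i, Ideal (R i)) (htop : c ≠ ⊤) (hbot : c ≠ ⊥) :
    {I : Ideal (∀ i, R i) // I ≠ ⊥ ∧ I ≠ ⊤} :=
  ⟨pi c, (map_eq_bot_iff piOrderIso.symm).not.mpr hbot,
    (map_eq_top_iff piOrderIso.symm).not.mpr htop⟩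

theorem piOrderIso_piVertex (c : ∀ i, Ideal (R i)) (htop : c ≠ ⊤) (hbot : c ≠ ⊥) :
    piOrderIso (piVertex c htop hbot).1 = c :=
  piOrderIso.apply_symm_apply c

variable [∀ i, IsLocalRing (R i)]

theorem eq_top_of_closedNbhd_eq [Nontrivial ι]
    {I J : {I : Ideal (∀ i, R i) // I ≠ ⊥ ∧ I ≠ ⊤}}
    (hN : insert I ((PIS _).neighborSet I) = insert J ((PIS _).neighborSet J)) {i : ι}
    (hJ : piOrderIso J.1 i = ⊤) : piOrderIso I.1 i = ⊤ := by
  classical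
  by_contra hI
  obtain ⟨j, hji⟩ := exists_ne i
  set e := Function.update (⊤ : ∀ i, Ideal (R i)) i (maximalIdeal (R i))
  have he_top : e ≠ ⊤ := fun h =>
    (maximalIdeal.isMaximal _).ne_top (by simpa [e] using congrFun h i)
  have he_bot : e ≠ ⊥ := fun h =>
    (top_ne_bot (α := Ideal (R j))) (by simpa [e, hji] using congrFun h j)
  set K := piVertex e he_top he_bot
  have hK : piOrderIso K.1 = e := piOrderIso_piVertex e he_top he_bot
  have hKI : K ∈ insert I ((PIS _).neighborSet I) := by
    refine mem_closedNbhd_iff.mpr (Or.inr (isPrime_iff_piOrderIso.mpr ⟨i, ?_, fun k hk => ?_⟩))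
    · simpa [map_sup, hK, e, le_maximalIdeal hI] using (maximalIdeal.isMaximal _).isPrime
    · simp [map_sup, hK, e, hk]
  rw [hN, mem_closedNbhd_iff] at hKI
  rcases hKI with hKJ | hprime
  · apply (maximalIdeal.isMaximal (R i)).ne_top
    rw [← hJ, ← hKJ, hK]
    simp [e]
  · refine hprime.ne_top (piOrderIso.injective (funext fun k => ?_))
    by_cases hk : k = i
    · subst hk; simp [map_sup, hJ]
    · simp [map_sup, hK, e, hk]

theorem eq_maximalIdeal_of_closedNbhd_eq [∀ i, IsArtinianRing (R i)] {p q : ι} (hqp : q ≠ p)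
    (hMq : maximalIdeal (R q) ≠ ⊥) {I J : {I : Ideal (∀ i, R i) // I ≠ ⊥ ∧ I ≠ ⊤}}
    (hN : insert I ((PIS _).neighborSet I) = insert J ((PIS _).neighborSet J))
    (hIp : piOrderIso I.1 p = maximalIdeal (R p)) (hI : ∀ j ≠ p, piOrderIso I.1 j = ⊤)
    (hJ : ∀ j ≠ p, piOrderIso J.1 j = ⊤) : piOrderIso J.1 p = maximalIdeal (R p) := by
  classical
  set e := Function.update (Function.update (⊤ : ∀ i, Ideal (R i)) p ⊥) q (maximalIdeal (R q))
  have he_top : e ≠ ⊤ := fun h =>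
    (maximalIdeal.isMaximal _).ne_top (by simpa [e] using congrFun h q)
  have he_bot : e ≠ ⊥ := fun h => hMq (by simpa [e] using congrFun h q)
  set K := piVertex e he_top he_bot
  have hK : piOrderIso K.1 = e := piOrderIso_piVertex e he_top he_bot
  have hKI : K ∈ insert I ((PIS _).neighborSet I) := by
    refine mem_closedNbhd_iff.mpr (Or.inr (isPrime_iff_piOrderIso.mpr ⟨p, ?_, fun k hk => ?_⟩))
    · simpa [map_sup, hK, e, hIp, hqp.symm] using (maximalIdeal.isMaximal _).isPrime
    · simp [map_sup, hI k hk]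
  rw [hN, mem_closedNbhd_iff] at hKI
  rcases hKI with hKJ | hprime
  · refine absurd ?_ (maximalIdeal.isMaximal (R q)).ne_top
    rw [← hJ q hqp, ← hKJ, hK]
    simp [e]
  · obtain ⟨p', hp', -⟩ := isPrime_iff_piOrderIso.mp hprime
    rcases eq_or_ne p' p with rfl | hp'p
    · simpa [map_sup, hK, e, hqp.symm, isPrime_iff_eq_maximalIdeal] using hp'
    · exact absurd (by simp [map_sup, hJ p' hp'p]) hp'.ne_top

end PIS

/-- For `R ≅ R₁ × ⋯ × Rₙ` (`n ≥ 2`) with each `(Rᵢ, Mᵢ)` an Artinian local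
principal ideal ring having at least two nonzero proper ideals, no two
distinct vertices of `PIS(R)` have equal closed neighborhoods. -/
theorem pis_closedNeighborSet_injective_of_localPIR {n : ℕ} (hn : 2 ≤ n)
    (R : Fin n → Type*) [∀ i, CommRing (R i)] [∀ i, IsLocalRing (R i)]
    [∀ i, IsPrincipalIdealRing (R i)] [∀ i, IsArtinianRing (R i)]
    (htwo : ∀ i, ({I : Ideal (R i) | I ≠ ⊥ ∧ I ≠ ⊤}).Nontrivial) :
    ∀ I J : {I : Ideal (∀ i, R i) // I ≠ ⊥ ∧ I ≠ ⊤}, I ≠ J →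
      insert I ((PIS (∀ i, R i)).neighborSet I) ≠
        insert J ((PIS (∀ i, R i)).neighborSet J) := by
  have : Nontrivial (Fin n) := Fin.nontrivial_iff_two_le.mpr hn
  intro I J hIJ hN
  set c := piOrderIso I.1
  set d := piOrderIso J.1
  have htop i : c i = ⊤ ↔ d i = ⊤ :=
    ⟨PIS.eq_top_of_closedNbhd_eq hN.symm, PIS.eq_top_of_closedNbhd_eq hN⟩
  have hIJ_prime : (I.1 ⊔ J.1).IsPrime :=
    (PIS.mem_closedNbhd_iff.mp (hN ▸ Set.mem_insert J _)).resolve_left hIJ.symm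
  obtain ⟨p, hp, hoff⟩ := isPrime_iff_piOrderIso.mp hIJ_prime
  rw [map_sup, Pi.sup_apply, isPrime_iff_eq_maximalIdeal] at hp
  simp only [map_sup, Pi.sup_apply] at hoff
  have hc j (hj : j ≠ p) : c j = ⊤ :=
    (eq_top_or_eq_top_of_sup_eq_top (hoff j hj)).elim id (htop j).mpr
  have hd j (hj : j ≠ p) : d j = ⊤ := (htop j).mp (hc j hj)
  obtain ⟨q, hqp⟩ := exists_ne p
  have hMq : maximalIdeal (R q) ≠ ⊥ := by
    obtain ⟨X, ⟨hX0, hX1⟩, -⟩ := htwo q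
    exact fun h => hX0 (le_bot_iff.mp (h ▸ le_maximalIdeal hX1))
  have hcd : c p = d p := by
    rcases eq_maximalIdeal_or_of_sup_eq (IsPrincipalIdealRing.principal _) hp with h | h
    · exact h.trans (PIS.eq_maximalIdeal_of_closedNbhd_eq hqp hMq hN h hc hd).symm
    · exact (PIS.eq_maximalIdeal_of_closedNbhd_eq hqp hMq hN.symm h hd hc).trans h.symm
  refine hIJ (Subtype.ext (piOrderIso.injective (funext fun j => ?_)))
  by_cases hj : j = p
  · exact hj ▸ hcd
  · exact (hc j hj).trans (hd j hj).symm
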